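/- Let w be a weight on ℝⁿ with the M-good doubling property and let g : ℝⁿ → [0,∞) be a bounded radially decreasing function supported in B(0,κ) whose superlevel sets {g > λ} are balls centered at the origin of radius between r₀ > 0 and κ for all λ ∈ (0, sup g), with r₀, κ ∈ [1/M, M]. Then (1 + 1/M)⁻¹ ‖g‖₁ · w(B(0,1))/|B(0,1)| ≤ (g ∗ w)(0) ≤ (1 + 1/M) ‖g‖₁ · w(B(0,1))/|B(0,1)|. -/

import Mathlib

/-!
Since `g` is radial, `(g ∗ w)(0) = ∫ g w`. By the layer-cake formula, `∫ g` and `∫ g w` are the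
integrals over `λ > 0` of the Lebesgue measure and of the `w`-measure of `{g > λ}`. Each of these
sets is empty or a ball `B(0,ρ)` with `ρ ∈ [1/M, M]`, and good doubling at scale `R = 1`, applied
to the balls `B(0,ρ)` and `B(0,1)`, says that `w(B(0,ρ))` is within a factor `1 + 1/M` of
`ρⁿ w(B(0,1)) = |B(0,ρ)| · w(B(0,1))/|B(0,1)|`. Integrating in `λ` gives both bounds.
-/

open MeasureTheory Metric Set Real Filter
noncomputable section

/-- `w` has the `M`-good doubling property: for all `x, R`, all `y ∈ B(x,R)` and all
`s, r ∈ [R/M, MR]`, `(1+1/M)⁻¹ ≤ [w(B(x,r))/w(B(y,s))]·(sⁿ/rⁿ) ≤ 1+1/M`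
(stated in multiplied-out form). -/
def GoodDoubling (n : ℕ) (M : ℝ) (w : EuclideanSpace ℝ (Fin n) → ℝ) : Prop :=
  ∀ (x : EuclideanSpace ℝ (Fin n)) (R : ℝ), 0 < R → ∀ y ∈ Metric.ball x R,
    ∀ r ∈ Set.Icc (R/M) (M*R), ∀ s ∈ Set.Icc (R/M) (M*R),
      (1+1/M)⁻¹ * (∫ z in Metric.ball y s, w z) * r^n ≤ (∫ z in Metric.ball x r, w z) * s^n ∧
      (∫ z in Metric.ball x r, w z) * s^n ≤ (1+1/M) * (∫ z in Metric.ball y s, w z) * r^n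

open scoped ENNReal

section LayerCake

variable {α : Type*} [MeasurableSpace α] {μ ν : Measure α} {f : α → ℝ}

theorem mul_lintegral_le_mul_lintegral_of_meas_lt (hf0 : 0 ≤ f) (hfm : Measurable f)
    {a b : ℝ≥0∞} (h : ∀ t, 0 < t → a * μ {x | t < f x} ≤ b * ν {x | t < f x}) :
    a * ∫⁻ x, ENNReal.ofReal (f x) ∂μ ≤ b * ∫⁻ x, ENNReal.ofReal (f x) ∂ν := by
  have hmeas : ∀ ρ : Measure α, Measurable fun t : ℝ => ρ {x | t < f x} := fun ρ =>
    Antitone.measurable fun s t hst => measure_mono fun x (hx : t < f x) => hst.trans_lt hx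
  rw [lintegral_eq_lintegral_meas_lt μ (ae_of_all _ hf0) hfm.aemeasurable,
    lintegral_eq_lintegral_meas_lt ν (ae_of_all _ hf0) hfm.aemeasurable,
    ← lintegral_const_mul a (hmeas μ), ← lintegral_const_mul b (hmeas ν)]
  exact setLIntegral_mono ((hmeas ν).const_mul b) h

theorem mul_integral_le_mul_integral_of_meas_lt (hf0 : 0 ≤ f) (hfm : Measurable f)
    {a b : ℝ≥0∞} (hb : b ≠ ∞) (h : ∀ t, 0 < t → a * μ {x | t < f x} ≤ b * ν {x | t < f x})
    (hfν : Integrable f ν) :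
    a.toReal * ∫ x, f x ∂μ ≤ b.toReal * ∫ x, f x ∂ν := by
  rw [integral_eq_lintegral_of_nonneg_ae (ae_of_all _ hf0) hfm.aestronglyMeasurable,
    integral_eq_lintegral_of_nonneg_ae (ae_of_all _ hf0) hfm.aestronglyMeasurable,
    ← ENNReal.toReal_mul, ← ENNReal.toReal_mul]
  exact ENNReal.toReal_mono (ENNReal.mul_ne_top hb hfν.lintegral_lt_top.ne)
    (mul_lintegral_le_mul_lintegral_of_meas_lt hf0 hfm h)

theorem integrable_of_norm_le_of_support_subset {s : Set α} (hs : μ s ≠ ∞)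
    (hfm : AEStronglyMeasurable f μ) {C : ℝ} (hC : ∀ x, ‖f x‖ ≤ C)
    (hf : Function.support f ⊆ s) : Integrable f μ :=
  (integrableOn_iff_integrable_of_support_subset hf).1
    (Measure.integrableOn_of_bounded hs hfm (ae_of_all _ hC))

theorem integral_withDensity_ofReal {w : α → ℝ} (hw0 : ∀ x, 0 ≤ w x) (hwm : AEMeasurable w μ)
    (f : α → ℝ) :
    ∫ x, f x ∂μ.withDensity (fun x => ENNReal.ofReal (w x)) = ∫ x, f x * w x ∂μ := by
  rw [integral_withDensity_eq_integral_toReal_smul₀ hwm.ennreal_ofReal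
    (ae_of_all _ fun _ => ENNReal.ofReal_lt_top)]
  simp only [ENNReal.toReal_ofReal (hw0 _), smul_eq_mul, mul_comm]

end LayerCake

theorem measurable_of_norm_le_imp_le {E : Type*} [NormedAddCommGroup E] [MeasurableSpace E]
    [OpensMeasurableSpace E] {g : E → ℝ} (hg : ∀ a b : E, ‖a‖ ≤ ‖b‖ → g b ≤ g a) :
    Measurable g := by
  refine measurable_of_Ioi fun t => ?_
  have hT : IsLowerSet {r : ℝ | ∃ a, t < g a ∧ r ≤ ‖a‖} :=
    fun _ _ hr ⟨a, ha, hra⟩ => ⟨a, ha, hr.trans hra⟩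
  have : g ⁻¹' Ioi t = norm ⁻¹' {r : ℝ | ∃ a, t < g a ∧ r ≤ ‖a‖} :=
    ext fun x => ⟨fun hx => ⟨x, hx, le_rfl⟩, fun ⟨a, ha, hxa⟩ => ha.trans_le (hg x a hxa)⟩
  rw [this]
  exact measurable_norm hT.ordConnected.measurableSet

def unitBallAverage {n : ℕ} (w : EuclideanSpace ℝ (Fin n) → ℝ) : ℝ :=
  (∫ z in ball (0 : EuclideanSpace ℝ (Fin n)) 1, w z) /
    (volume (ball (0 : EuclideanSpace ℝ (Fin n)) 1)).toReal

theorem unitBallAverage_nonneg {n : ℕ} {w : EuclideanSpace ℝ (Fin n) → ℝ} (hw0 : ∀ x, 0 ≤ w x) :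
    0 ≤ unitBallAverage w :=
  div_nonneg (setIntegral_nonneg measurableSet_ball fun x _ => hw0 x) ENNReal.toReal_nonneg

namespace GoodDoubling

variable {n : ℕ} {M : ℝ} {w : EuclideanSpace ℝ (Fin n) → ℝ}

theorem integral_ball_zero_bounds (hgd : GoodDoubling n M w) (hM : 1 ≤ M) {ρ : ℝ}
    (hρ : ρ ∈ Icc (1/M) M) :
    (1+1/M)⁻¹ * (∫ z in ball 0 1, w z) * ρ^n ≤ ∫ z in ball 0 ρ, w z ∧
      ∫ z in ball 0 ρ, w z ≤ (1+1/M) * (∫ z in ball 0 1, w z) * ρ^n := by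
  have h1 : (1 : ℝ) ∈ Icc (1/M) (M*1) :=
    ⟨(div_le_one (by linarith)).2 hM, by rwa [mul_one]⟩
  have := hgd 0 1 one_pos 0 (mem_ball_self one_pos) ρ (by rwa [mul_one]) 1 h1
  rwa [one_pow, mul_one] at this

theorem measure_ball_zero_bounds (hgd : GoodDoubling n M w) (hM : 1 ≤ M) (hw0 : ∀ x, 0 ≤ w x)
    (hwi : LocallyIntegrable w) {ρ : ℝ} (hρ : ρ ∈ Icc (1/M) M) :
    ENNReal.ofReal ((1+1/M)⁻¹ * unitBallAverage w) * volume (ball (0 : EuclideanSpace ℝ (Fin n)) ρ)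
        ≤ volume.withDensity (fun z => ENNReal.ofReal (w z)) (ball 0 ρ) ∧
      volume.withDensity (fun z => ENNReal.ofReal (w z)) (ball 0 ρ)
        ≤ ENNReal.ofReal ((1+1/M) * unitBallAverage w)
          * volume (ball (0 : EuclideanSpace ℝ (Fin n)) ρ) := by
  have hρ0 : 0 < ρ := (by positivity : 0 < 1/M).trans_le hρ.1
  have hB1 : 0 < (volume (ball (0 : EuclideanSpace ℝ (Fin n)) 1)).toReal :=
    ENNReal.toReal_pos (measure_ball_pos volume _ one_pos).ne' measure_ball_lt_top.ne
  have hν : volume.withDensity (fun z => ENNReal.ofReal (w z)) (ball 0 ρ) =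
      ENNReal.ofReal (∫ z in ball 0 ρ, w z) := by
    rw [withDensity_apply _ measurableSet_ball, ofReal_integral_eq_lintegral_ofReal
      ((hwi.integrableOn_isCompact (isCompact_closedBall 0 ρ)).mono_set ball_subset_closedBall)
      (ae_of_all _ hw0)]
  have hvol : volume (ball (0 : EuclideanSpace ℝ (Fin n)) ρ) =
      ENNReal.ofReal (ρ^n * (volume (ball (0 : EuclideanSpace ℝ (Fin n)) 1)).toReal) := by
    rw [Measure.addHaar_ball_of_pos _ _ hρ0, finrank_euclideanSpace_fin,
      ENNReal.ofReal_mul (by positivity), ENNReal.ofReal_toReal measure_ball_lt_top.ne]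
  obtain ⟨hlo, hhi⟩ := hgd.integral_ball_zero_bounds hM hρ
  rw [hν, hvol, ← ENNReal.ofReal_mul' (by positivity), ← ENNReal.ofReal_mul' (by positivity)]
  constructor <;> apply ENNReal.ofReal_le_ofReal
  · calc _ = (1+1/M)⁻¹ * (∫ z in ball 0 1, w z) * ρ^n := by
          unfold unitBallAverage; field_simp
      _ ≤ _ := hlo
  · calc _ ≤ (1+1/M) * (∫ z in ball 0 1, w z) * ρ^n := hhi
      _ = _ := by unfold unitBallAverage; field_simp

theorem measure_superlevel_bounds (hgd : GoodDoubling n M w) (hM : 1 ≤ M) (hw0 : ∀ x, 0 ≤ w x)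
    (hwi : LocallyIntegrable w) {g : EuclideanSpace ℝ (Fin n) → ℝ} (hgb : BddAbove (range g))
    (hlevel : ∀ t, 0 < t → t < sSup (range g) →
      ∃ ρ ∈ Icc (1/M) M, {z | t < g z} = ball (0 : EuclideanSpace ℝ (Fin n)) ρ)
    {t : ℝ} (ht : 0 < t) :
    ENNReal.ofReal ((1+1/M)⁻¹ * unitBallAverage w) * volume {z | t < g z}
        ≤ volume.withDensity (fun z => ENNReal.ofReal (w z)) {z | t < g z} ∧
      volume.withDensity (fun z => ENNReal.ofReal (w z)) {z | t < g z}
        ≤ ENNReal.ofReal ((1+1/M) * unitBallAverage w) * volume {z | t < g z} := by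
  rcases lt_or_ge t (sSup (range g)) with htS | htS
  · obtain ⟨ρ, hρ, hball⟩ := hlevel t ht htS
    rw [hball]
    exact hgd.measure_ball_zero_bounds hM hw0 hwi hρ
  · have : {z | t < g z} = ∅ :=
      eq_empty_of_forall_notMem fun z hz => (le_csSup hgb ⟨z, rfl⟩).not_gt (htS.trans_lt hz)
    simp [this]

end GoodDoubling

theorem layer_cake_good_doubling_general (n : ℕ) (M r₀ κ : ℝ) (hM : 1 < M)
    (hr₀ : r₀ ∈ Set.Icc (1/M) M) (hκ : κ ∈ Set.Icc (1/M) M)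
    (w : EuclideanSpace ℝ (Fin n) → ℝ)
    (hw0 : ∀ x, 0 ≤ w x) (hwi : MeasureTheory.LocallyIntegrable w)
    (hgd : GoodDoubling n M w)
    (g : EuclideanSpace ℝ (Fin n) → ℝ)
    (hgb : BddAbove (Set.range g)) (hg0 : ∀ x, 0 ≤ g x)
    (hgrad : ∀ a b : EuclideanSpace ℝ (Fin n), ‖a‖ ≤ ‖b‖ → g b ≤ g a)
    (hgsupp : Function.support g ⊆ Metric.ball 0 κ)
    (hlevel : ∀ lam : ℝ, 0 < lam → lam < sSup (Set.range g) →
      ∃ ρ ∈ Set.Icc r₀ κ, {z | lam < g z} = Metric.ball (0 : EuclideanSpace ℝ (Fin n)) ρ) :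
    (1+1/M)⁻¹ * (∫ z, g z) *
        ((∫ z in Metric.ball (0 : EuclideanSpace ℝ (Fin n)) 1, w z) /
          (MeasureTheory.volume (Metric.ball (0 : EuclideanSpace ℝ (Fin n)) 1)).toReal)
      ≤ (∫ z, g (-z) * w z) ∧
    (∫ z, g (-z) * w z)
      ≤ (1+1/M) * (∫ z, g z) *
        ((∫ z in Metric.ball (0 : EuclideanSpace ℝ (Fin n)) 1, w z) /
          (MeasureTheory.volume (Metric.ball (0 : EuclideanSpace ℝ (Fin n)) 1)).toReal) := by
  set ν := volume.withDensity fun z => ENNReal.ofReal (w z)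
  have hgm : Measurable g := measurable_of_norm_le_imp_le hgrad
  have hgeven : ∀ z, g (-z) = g z := fun z =>
    le_antisymm (hgrad _ _ (norm_neg z).ge) (hgrad _ _ (norm_neg z).le)
  have hgw : ∫ z, g (-z) * w z = ∫ z, g z ∂ν := by
    rw [integral_withDensity_ofReal hw0 hwi.aestronglyMeasurable.aemeasurable]
    simp only [hgeven]
  have hlevel_Icc : ∀ t, 0 < t → t < sSup (range g) →
      ∃ ρ ∈ Icc (1/M) M, {z | t < g z} = ball (0 : EuclideanSpace ℝ (Fin n)) ρ :=
    fun t ht htS => let ⟨ρ, hρ, h⟩ := hlevel t ht htS; ⟨ρ, ⟨hr₀.1.trans hρ.1, hρ.2.trans hκ.2⟩, h⟩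
  have hbounds := fun t (ht : 0 < t) =>
    hgd.measure_superlevel_bounds hM.le hw0 hwi hgb hlevel_Icc ht
  have hg_le : ∀ z, ‖g z‖ ≤ sSup (range g) := fun z =>
    (Real.norm_of_nonneg (hg0 z)).trans_le (le_csSup hgb ⟨z, rfl⟩)
  have hνκ : ν (ball 0 κ) ≠ ∞ := ne_top_of_le_ne_top
    (ENNReal.mul_ne_top ENNReal.ofReal_ne_top measure_ball_lt_top.ne)
    (hgd.measure_ball_zero_bounds hM.le hw0 hwi hκ).2
  have hlo := mul_integral_le_mul_integral_of_meas_lt hg0 hgm ENNReal.one_ne_top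
    (fun t ht => (hbounds t ht).1.trans_eq (one_mul _).symm)
    (integrable_of_norm_le_of_support_subset hνκ hgm.aestronglyMeasurable hg_le hgsupp)
  have hhi := mul_integral_le_mul_integral_of_meas_lt hg0 hgm ENNReal.ofReal_ne_top
    (fun t ht => (one_mul _).trans_le (hbounds t ht).2)
    (integrable_of_norm_le_of_support_subset measure_ball_lt_top.ne hgm.aestronglyMeasurable
      hg_le hgsupp)
  have havg := unitBallAverage_nonneg hw0
  rw [ENNReal.toReal_ofReal (by positivity), ENNReal.toReal_one] at hlo hhi
  rw [hgw]
  unfold unitBallAverage at hlo hhi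
  constructor <;> linarith

/-- If `w` is `M`-good doubling and `g ≥ 0` is a bounded radially
decreasing function supported in `B(0,κ)` whose superlevel sets `{g > λ}`, for
`λ ∈ (0, sup g)`, are origin-centered balls of radius in `[r₀,κ]`, with `r₀,κ ∈ [1/M,M]`,
then `(1+1/M)⁻¹ ‖g‖₁ w(B(0,1))/|B(0,1)| ≤ (g ∗ w)(0) ≤ (1+1/M) ‖g‖₁ w(B(0,1))/|B(0,1)|`. -/
theorem layer_cake_good_doubling (n : ℕ) (M r₀ κ : ℝ) (hM : 1 < M)
    (hr₀ : r₀ ∈ Set.Icc (1/M) M) (hκ : κ ∈ Set.Icc (1/M) M) (hr₀κ : r₀ ≤ κ)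
    (w : EuclideanSpace ℝ (Fin n) → ℝ)
    (hw0 : ∀ x, 0 ≤ w x) (hwi : MeasureTheory.LocallyIntegrable w)
    (hgd : GoodDoubling n M w)
    (g : EuclideanSpace ℝ (Fin n) → ℝ)
    (hgb : BddAbove (Set.range g)) (hg0 : ∀ x, 0 ≤ g x)
    (hgrad : ∀ a b : EuclideanSpace ℝ (Fin n), ‖a‖ ≤ ‖b‖ → g b ≤ g a)
    (hgsupp : Function.support g ⊆ Metric.ball 0 κ)
    (hlevel : ∀ lam : ℝ, 0 < lam → lam < sSup (Set.range g) →
      ∃ ρ ∈ Set.Icc r₀ κ, {z | lam < g z} = Metric.ball (0 : EuclideanSpace ℝ (Fin n)) ρ) :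
    (1+1/M)⁻¹ * (∫ z, g z) *
        ((∫ z in Metric.ball (0 : EuclideanSpace ℝ (Fin n)) 1, w z) /
          (MeasureTheory.volume (Metric.ball (0 : EuclideanSpace ℝ (Fin n)) 1)).toReal)
      ≤ (∫ z, g (-z) * w z) ∧
    (∫ z, g (-z) * w z)
      ≤ (1+1/M) * (∫ z, g z) *
        ((∫ z in Metric.ball (0 : EuclideanSpace ℝ (Fin n)) 1, w z) /
          (MeasureTheory.volume (Metric.ball (0 : EuclideanSpace ℝ (Fin n)) 1)).toReal) :=
  layer_cake_good_doubling_general n M r₀ κ hM hr₀ hκ w hw0 hwi hgd g hgb hg0 hgrad hgsupp hlevel
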